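/- Let U ⊆ ℝ^m be a connected open set and let f : U → ℝ^n be real-analytic. If f is not identically zero on U, then the zero set Z(f) = {x ∈ U : f(x) = 0} has Lebesgue measure zero in ℝ^m. -/

import Mathlib

/-!
Pick a coordinate `g` of `f` that does not vanish identically. By the identity theorem, at each
point of the connected set `U` some iterated derivative of `g` is nonzero, so the zeros of `g` are
covered by the strata `{D^k g = 0, D^(k+1) g ≠ 0}`. Near a point of such a stratum, one entry
`h` of `D^k g` has a nonvanishing partial derivative `∂_c h`; by Rolle's theorem the zero set of
`h` then meets each line parallel to `e_c` at most once, so it is null by Fubini.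
-/

open MeasureTheory Set Filter Topology

theorem EuclideanSpace.volume_eq_zero_of_add_smul_single_mem {m : ℕ} (c : Fin m)
    {A : Set (EuclideanSpace ℝ (Fin m))} (hA : MeasurableSet A)
    (hline : ∀ a ∈ A, ∀ t : ℝ, a + t • EuclideanSpace.single c (1 : ℝ) ∈ A → t = 0) :
    volume A = 0 := by
  cases m with
  | zero => exact c.elim0
  | succ m =>
  let e : EuclideanSpace ℝ (Fin (m + 1)) ≃ᵐ (Fin m → ℝ) × ℝ :=
    ((MeasurableEquiv.toLp 2 _).symm.trans
      (MeasurableEquiv.piFinSuccAbove (fun _ ↦ ℝ) c)).trans MeasurableEquiv.prodComm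
  have he : MeasurePreserving e volume (volume.prod volume) := by
    have h₂ := volume_preserving_piFinSuccAbove (fun _ : Fin (m + 1) ↦ ℝ) c
    rw [Measure.volume_eq_prod] at h₂
    exact Measure.measurePreserving_swap.comp
      (h₂.comp (EuclideanSpace.volume_preserving_symm_measurableEquiv_toLp _))
  have hslice : ∀ x, (Prod.mk x ⁻¹' (e.symm ⁻¹' A)).Subsingleton := by
    intro x s hs t ht
    have hshift : e.symm (x, t) = e.symm (x, s) + (t - s) • EuclideanSpace.single c (1 : ℝ) := by
      change WithLp.toLp 2 (Fin.insertNthEquiv (fun _ ↦ ℝ) c (t, x)) =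
        WithLp.toLp 2 (Fin.insertNthEquiv (fun _ ↦ ℝ) c (s, x)) + _
      refine PiLp.ext ((Fin.forall_iff_succAbove c).2 ⟨?_, fun j ↦ ?_⟩) <;>
        simp [Fin.insertNthEquiv, Fin.succAbove_ne]
    exact (sub_eq_zero.1 (hline _ hs _ (hshift ▸ ht))).symm
  rw [← (he.symm e).measure_preimage hA.nullMeasurableSet,
    Measure.measure_prod_null (e.symm.measurable hA)]
  exact Eventually.of_forall fun x ↦ (hslice x).measure_zero _

theorem Convex.eq_zero_of_apply_add_smul_eq {E : Type*} [NormedAddCommGroup E] [NormedSpace ℝ E]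
    {S : Set E} (hS : Convex ℝ S) {h : E → ℝ} (hh : ∀ z ∈ S, DifferentiableAt ℝ h z)
    {w : E} (hw : ∀ z ∈ S, fderiv ℝ h z w ≠ 0) {a : E} {t : ℝ} (ha : a ∈ S)
    (hat : a + t • w ∈ S) (heq : h (a + t • w) = h a) : t = 0 := by
  by_contra ht
  have hT : Convex ℝ {s : ℝ | a + s • w ∈ S} := by
    have := hS.affine_preimage (AffineMap.lineMap a (a + w))
    simpa [preimage, AffineMap.lineMap_apply_module', add_comm] using this
  have hseg : ∀ s ∈ uIcc 0 t, a + s • w ∈ S :=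
    hT.ordConnected.uIcc_subset (by simpa using ha) hat
  have hderiv : ∀ s ∈ uIcc 0 t,
      HasDerivAt (fun s ↦ h (a + s • w)) (fderiv ℝ h (a + s • w) w) s := fun s hs ↦
    (hh _ (hseg s hs)).hasFDerivAt.comp_hasDerivAt s
      (((hasDerivAt_id s).smul_const w).const_add a |>.congr_deriv (one_smul ℝ w))
  have hends : h (a + (0 ⊓ t) • w) = h (a + (0 ⊔ t) • w) := by
    rcases le_total 0 t with h0 | h0 <;> simp [h0, heq]
  obtain ⟨c, hc, hc0⟩ := exists_hasDerivAt_eq_zero (inf_lt_sup.2 (Ne.symm ht))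
    (fun s hs ↦ (hderiv s hs).continuousAt.continuousWithinAt) hends
    (fun s hs ↦ hderiv s (Ioo_subset_Icc_self hs))
  exact hw _ (hseg c (Ioo_subset_Icc_self hc)) hc0

theorem ContDiffAt.exists_mem_nhds_volume_inter_preimage_zero_eq_zero {m : ℕ}
    {h : EuclideanSpace ℝ (Fin m) → ℝ} {y : EuclideanSpace ℝ (Fin m)} (hh : ContDiffAt ℝ 1 h y)
    {c : Fin m} (hc : fderiv ℝ h y (EuclideanSpace.single c 1) ≠ 0) :
    ∃ V ∈ 𝓝 y, volume (V ∩ h ⁻¹' {0}) = 0 := by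
  have hnear : ∀ᶠ z in 𝓝 y,
      DifferentiableAt ℝ h z ∧ fderiv ℝ h z (EuclideanSpace.single c 1) ≠ 0 :=
    (hh.eventually (by simp)).mono (fun z hz ↦ hz.differentiableAt one_ne_zero) |>.and
      ((hh.continuousAt_fderiv one_ne_zero).clm_apply continuousAt_const |>.eventually_ne hc)
  obtain ⟨r, hr, hball⟩ := Metric.nhds_basis_closedBall.eventually_iff.1 hnear
  refine ⟨Metric.closedBall y r, Metric.closedBall_mem_nhds y hr, ?_⟩
  have hmeas : MeasurableSet (Metric.closedBall y r ∩ h ⁻¹' {0}) :=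
    ContinuousOn.preimage_isClosed_of_isClosed
      (fun z hz ↦ (hball hz).1.continuousAt.continuousWithinAt) Metric.isClosed_closedBall
      isClosed_singleton |>.measurableSet
  refine EuclideanSpace.volume_eq_zero_of_add_smul_single_mem c hmeas ?_
  rintro a ⟨ha, ha0⟩ t ⟨hat, hat0⟩
  exact (convex_closedBall y r).eq_zero_of_apply_add_smul_eq (fun z hz ↦ (hball hz).1)
    (fun z hz ↦ (hball hz).2) ha hat (hat0.trans ha0.symm)

theorem ContinuousMultilinearMap.exists_apply_basis_ne_zero {R ι κ E F : Type*} [CommSemiring R]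
    [AddCommMonoid E] [Module R E] [TopologicalSpace E] [AddCommMonoid F] [Module R F]
    [TopologicalSpace F] [Finite κ] (b : Module.Basis ι R E)
    {L : ContinuousMultilinearMap R (fun _ : κ ↦ E) F} (hL : L ≠ 0) :
    ∃ j : κ → ι, L (fun i ↦ b (j i)) ≠ 0 := by
  contrapose! hL
  exact toMultilinearMap_injective (Module.Basis.ext_multilinear (fun _ ↦ b) hL)

theorem AnalyticAt.exists_mem_nhds_volume_inter_iteratedFDeriv_eq_zero {m k : ℕ}
    {g : EuclideanSpace ℝ (Fin m) → ℝ} {y : EuclideanSpace ℝ (Fin m)} (hg : AnalyticAt ℝ g y)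
    (hy : iteratedFDeriv ℝ (k + 1) g y ≠ 0) :
    ∃ V ∈ 𝓝 y, volume (V ∩ {z | iteratedFDeriv ℝ k g z = 0}) = 0 := by
  obtain ⟨j, hj⟩ := ContinuousMultilinearMap.exists_apply_basis_ne_zero
    (EuclideanSpace.basisFun (Fin m) ℝ).toBasis hy
  set v : Fin (k + 1) → EuclideanSpace ℝ (Fin m) := fun i ↦ EuclideanSpace.single (j i) 1
  have hv : iteratedFDeriv ℝ (k + 1) g y v ≠ 0 := by simpa using hj
  let evalTail :=
    ContinuousMultilinearMap.apply ℝ (fun _ : Fin k ↦ EuclideanSpace ℝ (Fin m)) ℝ (Fin.tail v)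
  obtain ⟨s, hs, hgs⟩ := hg.exists_mem_nhds_analyticOnNhd
  have hDk : AnalyticAt ℝ (iteratedFDeriv ℝ k g) y := hgs.iteratedFDeriv k y (mem_of_mem_nhds hs)
  have hc : fderiv ℝ (evalTail ∘ iteratedFDeriv ℝ k g) y (v 0) ≠ 0 := by
    rwa [fderiv_comp _ evalTail.differentiableAt hDk.differentiableAt, evalTail.fderiv,
      ContinuousLinearMap.comp_apply, ContinuousMultilinearMap.apply_apply,
      ← iteratedFDeriv_succ_apply_left]
  obtain ⟨V, hV, hnull⟩ := ((evalTail.analyticAt _).comp hDk).contDiffAt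
    |>.exists_mem_nhds_volume_inter_preimage_zero_eq_zero hc
  refine ⟨V, hV, measure_mono_null (inter_subset_inter_right V fun z hz ↦ ?_) hnull⟩
  simp [evalTail, hz.out]

theorem AnalyticAt.eventuallyEq_zero_of_iteratedFDeriv_eq_zero {𝕜 E F : Type*}
    [NontriviallyNormedField 𝕜] [CharZero 𝕜] [NormedAddCommGroup E] [NormedSpace 𝕜 E]
    [NormedAddCommGroup F] [NormedSpace 𝕜 F] [CompleteSpace F] {g : E → F} {z : E}
    (hg : AnalyticAt 𝕜 g z) (hz : ∀ k, iteratedFDeriv 𝕜 k g z = 0) : g =ᶠ[𝓝 z] 0 := by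
  obtain ⟨p, r, hp⟩ := hg
  filter_upwards [Metric.eball_mem_nhds z hp.r_pos] with x hx
  have hsum := hp.hasSum_iteratedFDeriv (y := x - z) (by
    simpa [Metric.mem_eball, edist_eq_enorm_sub, edist_zero_right] using hx)
  simp only [hz, zero_apply, smul_zero, add_sub_cancel] at hsum
  exact hsum.unique hasSum_zero

theorem AnalyticOnNhd.volume_inter_preimage_zero_eq_zero {m : ℕ}
    {U : Set (EuclideanSpace ℝ (Fin m))} (hU : IsPreconnected U)
    {g : EuclideanSpace ℝ (Fin m) → ℝ} (hg : AnalyticOnNhd ℝ g U) (hne : ∃ x ∈ U, g x ≠ 0) :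
    volume (U ∩ g ⁻¹' {0}) = 0 := by
  have hflat (z) (hz : z ∈ U) : ∃ k, iteratedFDeriv ℝ k g z ≠ 0 := by
    by_contra! hzero
    obtain ⟨x, hx, hgx⟩ := hne
    exact hgx (hg.eqOn_zero_of_preconnected_of_eventuallyEq_zero hU hz
      ((hg z hz).eventuallyEq_zero_of_iteratedFDeriv_eq_zero hzero) hx)
  have hstrata : U ∩ g ⁻¹' {0} ⊆ ⋃ k : ℕ,
      U ∩ {z | iteratedFDeriv ℝ k g z = 0 ∧ iteratedFDeriv ℝ (k + 1) g z ≠ 0} := by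
    rintro z ⟨hz, hz0⟩
    obtain ⟨k, hk⟩ := Nat.exists_not_and_succ_of_not_zero_of_exists
      (not_not.2 <| by ext; simpa using hz0) (hflat z hz)
    exact mem_iUnion.2 ⟨k, hz, not_not.1 hk.1, hk.2⟩
  refine measure_mono_null hstrata (measure_iUnion_null fun k ↦ ?_)
  refine measure_null_of_locally_null _ ?_
  rintro y ⟨hy, -, hy'⟩
  obtain ⟨V, hV, hnull⟩ := (hg y hy).exists_mem_nhds_volume_inter_iteratedFDeriv_eq_zero hy'
  refine ⟨_, inter_mem_nhdsWithin _ hV, measure_mono_null ?_ hnull⟩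
  exact fun z hz ↦ ⟨hz.2, hz.1.2.1⟩

theorem stmt_0_general {m n : ℕ} (U : Set (EuclideanSpace ℝ (Fin m)))
    (hconn : IsConnected U)
    (f : EuclideanSpace ℝ (Fin m) → EuclideanSpace ℝ (Fin n))
    (hf : AnalyticOnNhd ℝ f U)
    (hnz : ∃ x ∈ U, f x ≠ 0) :
    volume {x ∈ U | f x = 0} = 0 := by
  obtain ⟨x₀, hx₀, hfx₀⟩ := hnz
  obtain ⟨i, hi⟩ : ∃ i, f x₀ i ≠ 0 := by
    contrapose! hfx₀
    ext i
    exact hfx₀ i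
  have hfi : AnalyticOnNhd ℝ (fun x ↦ f x i) U := fun x hx ↦
    (EuclideanSpace.proj i : EuclideanSpace ℝ (Fin n) →L[ℝ] ℝ).analyticAt _ |>.comp (hf x hx)
  refine measure_mono_null ?_
    (hfi.volume_inter_preimage_zero_eq_zero hconn.isPreconnected ⟨x₀, hx₀, hi⟩)
  rintro x ⟨hx, hfx⟩
  exact ⟨hx, by simp [hfx]⟩

/-- Zero sets of nontrivial real-analytic maps have Lebesgue measure zero. -/
theorem stmt_0 {m n : ℕ} (U : Set (EuclideanSpace ℝ (Fin m)))
    (hU : IsOpen U) (hconn : IsConnected U)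
    (f : EuclideanSpace ℝ (Fin m) → EuclideanSpace ℝ (Fin n))
    (hf : AnalyticOnNhd ℝ f U)
    (hnz : ∃ x ∈ U, f x ≠ 0) :
    volume {x ∈ U | f x = 0} = 0 :=
  stmt_0_general U hconn f hf hnz
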